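/- Let D ⊆ ℂ be a domain and let p : E → D be a holomorphic covering map from the unit disc onto D. Then for every holomorphic map f : E → D with f(0) = p(0) one has |f'(0)| ≤ |p'(0)|; consequently κ_D(p(0); p'(0)) = 1. -/

import Mathlib

open Set Metric Complex

noncomputable section

/-- The open unit disc `E` in `ℂ`. -/
def unitDisc : Set ℂ := Metric.ball (0 : ℂ) 1

/-- The Kobayashi–Royden pseudometric of a set `D` in a complex normed space:
`κ_D(z;X) = inf {|α| : ∃ holomorphic f : E → D, f(0) = z, α·f'(0) = X}`. -/
def kobayashi {V : Type*} [NormedAddCommGroup V] [NormedSpace ℂ V]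
    (D : Set V) (z X : V) : ℝ :=
  sInf {r : ℝ | ∃ (α : ℂ) (f : ℂ → V), ‖α‖ = r ∧
    DifferentiableOn ℂ f unitDisc ∧ MapsTo f unitDisc D ∧
    f 0 = z ∧ α • deriv f 0 = X}

/-- The Hahn pseudometric of a set `D` in a complex normed space:
`h_D(z;X) = inf {|α| : ∃ injective holomorphic f : E → D, f(0) = z, α·f'(0) = X}`. -/
def hahn {V : Type*} [NormedAddCommGroup V] [NormedSpace ℂ V]
    (D : Set V) (z X : V) : ℝ :=
  sInf {r : ℝ | ∃ (α : ℂ) (f : ℂ → V), ‖α‖ = r ∧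
    DifferentiableOn ℂ f unitDisc ∧ MapsTo f unitDisc D ∧ InjOn f unitDisc ∧
    f 0 = z ∧ α • deriv f 0 = X}

/-- `p` is a holomorphic covering map from the unit disc onto `D`. (Since the unit
disc is simply connected, such a covering is automatically a universal covering.) -/
def IsHoloCoveringOnto (p : ℂ → ℂ) (D : Set ℂ) : Prop :=
  DifferentiableOn ℂ p unitDisc ∧
  ∃ h : MapsTo p unitDisc D,
    IsCoveringMap (MapsTo.restrict p unitDisc D h) ∧ SurjOn p unitDisc D

/-!
Since the disc is simply connected, `f` lifts through the covering to a continuous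
`g : E → E` with `g 0 = 0` and `p ∘ g = f`. A covering is locally injective and an injective
holomorphic map has nonvanishing derivative, so `p` is locally biholomorphic and the lift `g`
is holomorphic. Schwarz's lemma gives `‖g'(0)‖ ≤ 1`, hence
`‖f'(0)‖ = ‖p'(0)‖ ‖g'(0)‖ ≤ ‖p'(0)‖`. As `p` itself competes in the infimum defining `κ` and
`p'(0) ≠ 0`, that infimum is `1`.
-/

open Filter Topology

theorem not_eventually_eq_of_injOn {q : ℂ → ℂ} {U : Set ℂ} {z : ℂ} (hU : U ∈ 𝓝 z)
    (hinj : InjOn q U) : ¬∀ᶠ w in 𝓝 z, q w = q z := by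
  intro h
  have hlocal : ∀ᶠ w in 𝓝[≠] z, w = z :=
    nhdsWithin_le_nhds <| (h.and hU).mono fun w hw => hinj hw.2 (mem_of_mem_nhds hU) hw.1
  obtain ⟨w, hw, hne⟩ := (hlocal.and self_mem_nhdsWithin).exists
  exact hne hw

theorem eventually_deriv_ne_zero_of_injOn {q : ℂ → ℂ} {U : Set ℂ} {z : ℂ} (hU : IsOpen U)
    (hq : DifferentiableOn ℂ q U) (hinj : InjOn q U) (hz : z ∈ U) :
    ∀ᶠ w in 𝓝[≠] z, deriv q w ≠ 0 := by
  refine ((hq.analyticAt (hU.mem_nhds hz)).deriv.eventually_eq_zero_or_eventually_ne_zero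
    ).resolve_left fun h => not_eventually_eq_of_injOn (hU.mem_nhds hz) hinj ?_
  obtain ⟨r, hr, hball⟩ := Metric.eventually_nhds_iff_ball.mp (h.and (hU.eventually_mem hz))
  filter_upwards [ball_mem_nhds z hr] with w hw
  exact isOpen_ball.is_const_of_deriv_eq_zero (convex_ball z r).isPreconnected
    (hq.mono fun x hx => (hball x hx).2) (fun x hx => (hball x hx).1) hw (mem_ball_self hr)

theorem OpenPartialHomeomorph.deriv_ne_zero (e : OpenPartialHomeomorph ℂ ℂ)
    (he : DifferentiableOn ℂ e e.source) {z : ℂ} (hz : z ∈ e.source) : deriv e z ≠ 0 := by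
  -- By isolated zeros `e.symm` is holomorphic on a punctured neighbourhood of `e z`, hence at
  -- `e z` by removable singularities; but a map with vanishing derivative has no
  -- differentiable local inverse.
  intro h0
  have hN := eventually_nhdsWithin_iff.mp
    (eventually_deriv_ne_zero_of_injOn e.open_source he e.injOn hz)
  set M := e.target ∩ e.symm ⁻¹' {w | w ≠ z → deriv e w ≠ 0}
  have hM : M ∈ 𝓝 (e z) := by
    refine inter_mem (e.open_target.mem_nhds (e.map_source hz)) ?_
    exact e.continuousAt_symm (e.map_source hz) |>.preimage_mem_nhds (by rw [e.left_inv hz]; exact hN)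
  have hsymm : DifferentiableOn ℂ e.symm M := by
    refine (Complex.differentiableOn_compl_singleton_and_continuousAt_iff hM).mp
      ⟨fun u hu => ?_, e.continuousAt_symm (e.map_source hz)⟩
    have hsu : e.symm u ≠ z := fun h => hu.2 (by rw [← h, e.right_inv hu.1.1]; rfl)
    refine (e.hasDerivAt_symm hu.1.1 (hu.1.2 hsu) ?_).differentiableAt
      |>.differentiableWithinAt
    exact (he.differentiableAt (e.open_source.mem_nhds (e.map_target hu.1.1))).hasDerivAt
  refine not_differentiableAt_of_local_left_inverse_hasDerivAt_zero (f := e) ?_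
    (e.eventually_right_inverse (e.map_source hz)) (hsymm.differentiableAt hM)
  rw [e.left_inv hz, ← h0]
  exact (he.differentiableAt (e.open_source.mem_nhds hz)).hasDerivAt

theorem deriv_ne_zero_of_injOn {q : ℂ → ℂ} {U : Set ℂ} {z : ℂ} (hU : IsOpen U)
    (hq : DifferentiableOn ℂ q U) (hinj : InjOn q U) (hz : z ∈ U) : deriv q z ≠ 0 := by
  obtain ⟨r, hr, hrU⟩ := Metric.isOpen_iff.mp hU z hz
  have hopen : ∀ s ⊆ ball z r, IsOpen s → IsOpen (q '' s) :=
    ((hq.mono hrU).analyticOnNhd isOpen_ball).is_constant_or_isOpen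
      (convex_ball z r).isPreconnected |>.resolve_left fun ⟨w, hw⟩ =>
        not_eventually_eq_of_injOn (hU.mem_nhds hz) hinj <| by
          filter_upwards [ball_mem_nhds z hr] with x hx
          rw [hw x hx, hw z (mem_ball_self hr)]
  have hopenMap : IsOpenMap ((ball z r).domRestrict q) := fun V hV => by
    have := hopen _ (Subtype.coe_image_subset _ V) (isOpen_ball.isOpenMap_subtype_val V hV)
    rwa [image_image] at this
  exact (OpenPartialHomeomorph.ofContinuousOpenRestrict
    ((hinj.mono hrU).toPartialEquiv q (ball z r)) (hq.continuousOn.mono hrU) hopenMap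
    isOpen_ball).deriv_ne_zero (hq.mono hrU) (mem_ball_self hr)

theorem exists_continuousOn_lift {X Y Z : Type*} [TopologicalSpace X] [TopologicalSpace Y]
    [TopologicalSpace Z] {p : X → Y} {Ω : Set X} {D : Set Y} (hmaps : MapsTo p Ω D)
    (hcov : IsCoveringMap (hmaps.restrict p Ω D)) {A : Set Z} [SimplyConnectedSpace A]
    [LocallyPathConnectedSpace A] {f : Z → Y} (hf : ContinuousOn f A) (hfD : MapsTo f A D)
    {a₀ : Z} (ha₀ : a₀ ∈ A) {e₀ : X} (he₀ : e₀ ∈ Ω) (hpe : p e₀ = f a₀) :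
    ∃ g : Z → X, ContinuousOn g A ∧ MapsTo g A Ω ∧ EqOn (p ∘ g) f A ∧ g a₀ = e₀ := by
  classical
  obtain ⟨G, ⟨hG₀, hG⟩, -⟩ := hcov.existsUnique_continuousMap_lifts
    ⟨hfD.restrict f A D, hf.mapsToRestrict hfD⟩ ⟨a₀, ha₀⟩ ⟨e₀, he₀⟩ (Subtype.ext hpe)
  set g : Z → X := fun z => if h : z ∈ A then G ⟨z, h⟩ else e₀
  have hgG : A.domRestrict g = Subtype.val ∘ G := funext fun z => dif_pos z.2
  refine ⟨g, ?_, fun z hz => ?_, fun z hz => ?_, ?_⟩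
  · rw [continuousOn_iff_continuous_domRestrict, hgG]
    fun_prop
  · simp [g, hz]
  · simpa [g, hz] using congrArg Subtype.val (congrFun hG ⟨z, hz⟩)
  · simp [g, ha₀, hG₀]

theorem differentiableOn_of_comp_eqOn {p f g : ℂ → ℂ} {Ω U : Set ℂ} (hΩ : IsOpen Ω)
    (hp : DifferentiableOn ℂ p Ω) (hp' : ∀ w ∈ Ω, deriv p w ≠ 0) (hU : IsOpen U)
    (hf : DifferentiableOn ℂ f U) (hg : ContinuousOn g U) (hgΩ : MapsTo g U Ω)
    (hfg : EqOn (p ∘ g) f U) : DifferentiableOn ℂ g U := fun _ hz =>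
  (HasDerivAt.of_comp_left (hg.continuousAt (hU.mem_nhds hz))
    (hp.differentiableAt (hΩ.mem_nhds (hgΩ hz))).hasDerivAt
    (hf.differentiableAt (hU.mem_nhds hz)).hasDerivAt (hp' _ (hgΩ hz))
    (eventually_of_mem (hU.mem_nhds hz) hfg)).differentiableAt.differentiableWithinAt

theorem deriv_ne_zero_of_isLocallyInjective {p : ℂ → ℂ} {Ω : Set ℂ} {D : Set ℂ} (hΩ : IsOpen Ω)
    (hp : DifferentiableOn ℂ p Ω) (hmaps : MapsTo p Ω D)
    (hinj : IsLocallyInjective (hmaps.restrict p Ω D)) {z : ℂ} (hz : z ∈ Ω) :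
    deriv p z ≠ 0 := by
  obtain ⟨V, hV, hzV, hVinj⟩ := hinj ⟨z, hz⟩
  refine deriv_ne_zero_of_injOn (hΩ.isOpenMap_subtype_val V hV)
    (hp.mono (Subtype.coe_image_subset _ _)) ?_ ⟨_, hzV, rfl⟩
  rintro _ ⟨a, ha, rfl⟩ _ ⟨b, hb, rfl⟩ hab
  exact congrArg Subtype.val (hVinj ha hb (Subtype.ext hab))

theorem isOpen_unitDisc : IsOpen unitDisc := isOpen_ball

theorem zero_mem_unitDisc : (0 : ℂ) ∈ unitDisc := mem_ball_self one_pos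

instance : ContractibleSpace unitDisc :=
  (convex_ball (0 : ℂ) 1).contractibleSpace ⟨0, zero_mem_unitDisc⟩

instance : LocallyPathConnectedSpace unitDisc := isOpen_unitDisc.locallyPathConnectedSpace

theorem norm_deriv_le_of_isCoveringMap {p f : ℂ → ℂ} {D : Set ℂ}
    (hp : DifferentiableOn ℂ p unitDisc) (hmaps : MapsTo p unitDisc D)
    (hcov : IsCoveringMap (hmaps.restrict p unitDisc D)) (hf : DifferentiableOn ℂ f unitDisc)
    (hfD : MapsTo f unitDisc D) (hf0 : f 0 = p 0) : ‖deriv f 0‖ ≤ ‖deriv p 0‖ := by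
  obtain ⟨g, hgc, hgE, hpg, hg0⟩ := exists_continuousOn_lift hmaps hcov hf.continuousOn hfD
    zero_mem_unitDisc zero_mem_unitDisc hf0.symm
  have hg : DifferentiableOn ℂ g unitDisc := differentiableOn_of_comp_eqOn isOpen_unitDisc hp
    (fun _ hw => deriv_ne_zero_of_isLocallyInjective isOpen_unitDisc hp hmaps
      hcov.isLocalHomeomorph.isLocallyInjective hw) isOpen_unitDisc hf hgc hgE hpg
  have hschwarz : ‖deriv g 0‖ ≤ 1 := Complex.norm_deriv_le_one_of_mapsTo_ball hg
    (by rw [hg0]; exact hgE.mono_right ball_subset_closedBall) one_pos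
  have hchain : deriv f 0 = deriv p 0 * deriv g 0 := by
    have hfpg : p ∘ g =ᶠ[𝓝 0] f :=
      eventually_of_mem (isOpen_unitDisc.mem_nhds zero_mem_unitDisc) hpg
    rw [← hfpg.deriv_eq, deriv_comp 0
      (hp.differentiableAt (isOpen_unitDisc.mem_nhds (hgE zero_mem_unitDisc)))
      (hg.differentiableAt (isOpen_unitDisc.mem_nhds zero_mem_unitDisc)), hg0]
  calc ‖deriv f 0‖ = ‖deriv p 0‖ * ‖deriv g 0‖ := by rw [hchain, norm_mul]
    _ ≤ ‖deriv p 0‖ := mul_le_of_le_one_right (norm_nonneg _) hschwarz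

theorem kobayashi_eq_one_of_forall_norm_deriv_le {V : Type*} [NormedAddCommGroup V]
    [NormedSpace ℂ V] {D : Set V} {p : ℂ → V} (hp : DifferentiableOn ℂ p unitDisc)
    (hpD : MapsTo p unitDisc D) (hp0 : deriv p 0 ≠ 0)
    (hmax : ∀ f : ℂ → V, DifferentiableOn ℂ f unitDisc → MapsTo f unitDisc D → f 0 = p 0 →
      ‖deriv f 0‖ ≤ ‖deriv p 0‖) :
    kobayashi D (p 0) (deriv p 0) = 1 := by
  have hone : (1 : ℝ) ∈ {r : ℝ | ∃ (α : ℂ) (f : ℂ → V), ‖α‖ = r ∧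
      DifferentiableOn ℂ f unitDisc ∧ MapsTo f unitDisc D ∧
      f 0 = p 0 ∧ α • deriv f 0 = deriv p 0} := ⟨1, p, norm_one, hp, hpD, rfl, one_smul ℂ _⟩
  refine le_antisymm (csInf_le ⟨0, ?_⟩ hone) (le_csInf ⟨1, hone⟩ ?_)
  · rintro _ ⟨α, -, rfl, -⟩
    exact norm_nonneg α
  · rintro _ ⟨α, f, rfl, hf, hfD, hf0, hα⟩
    refine le_of_mul_le_mul_right ?_ (norm_pos_iff.mpr hp0)
    calc 1 * ‖deriv p 0‖ = ‖α‖ * ‖deriv f 0‖ := by rw [one_mul, ← hα, norm_smul]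
      _ ≤ ‖α‖ * ‖deriv p 0‖ := mul_le_mul_of_nonneg_left (hmax f hf hfD hf0) (norm_nonneg α)

theorem stmt8_general (D : Set ℂ) (p : ℂ → ℂ)
    (hp : IsHoloCoveringOnto p D) :
    (∀ f : ℂ → ℂ, DifferentiableOn ℂ f unitDisc → MapsTo f unitDisc D →
      f 0 = p 0 → ‖deriv f 0‖ ≤ ‖deriv p 0‖) ∧
    kobayashi D (p 0) (deriv p 0) = 1 := by
  obtain ⟨hpd, hmaps, hcov, -⟩ := hp
  have hmax := fun f hf hfD hf0 =>
    norm_deriv_le_of_isCoveringMap (f := f) hpd hmaps hcov hf hfD hf0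
  have hp0 : deriv p 0 ≠ 0 := deriv_ne_zero_of_isLocallyInjective isOpen_unitDisc hpd hmaps
    hcov.isLocalHomeomorph.isLocallyInjective zero_mem_unitDisc
  exact ⟨hmax, kobayashi_eq_one_of_forall_norm_deriv_le hpd hmaps hp0 hmax⟩

/-- If `p : E → D` is a holomorphic covering of a domain `D ⊆ ℂ` by the unit disc,
then every holomorphic `f : E → D` with `f(0) = p(0)` satisfies `|f'(0)| ≤ |p'(0)|`;
consequently `κ_D(p(0); p'(0)) = 1`. -/
theorem stmt8 (D : Set ℂ) (hD : IsOpen D ∧ IsConnected D) (p : ℂ → ℂ)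
    (hp : IsHoloCoveringOnto p D) :
    (∀ f : ℂ → ℂ, DifferentiableOn ℂ f unitDisc → MapsTo f unitDisc D →
      f 0 = p 0 → ‖deriv f 0‖ ≤ ‖deriv p 0‖) ∧
    kobayashi D (p 0) (deriv p 0) = 1 :=
  stmt8_general D p hp
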